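/- arXiv:1701.01720 — 3 statements merged into one kernel-verified Lean document; each statement's English description precedes it below -/
import Mathlib

section
/- Conversely, if f is a Laurent polynomial in two variables such that V(f) ⊂ (ℂ*)² is smooth, reduced and irreducible, and the logarithmic Gauss map γ_f is constant on V(f), then up to multiplication by a monomial, f = z^a w^b - c for some c ∈ ℂ* and coprime integers a, b. -/
/-!
Pick a point of `V(f)` where the logarithmic gradient `(p, q)` is nonzero. Constancy of the
Gauss map says that `g = q·z∂_z f - p·w∂_w f` vanishes on `V(f)`, so `f ∣ g` by the
Nullstellensatz (`ℂ[ℤ²]` is a localization of `ℂ[z, w]`, and `f` is associated to an irreducible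
polynomial). As `g` has no monomials besides those of `f`, comparing extreme monomials for a
lexicographic order gives `g = c·f`, i.e. `q i - p j = c` on the support of `f`. Hence the
support lies on a lattice line `m₀ + ℤ(a, b)` with `a, b` coprime, and `f` is a monomial times a
Laurent polynomial in the single variable `z^a w^b`. That one-variable Laurent polynomial is
irreducible, hence linear over `ℂ`.
-/

/- A Laurent polynomial in two variables is encoded as an element of the
group algebra `AddMonoidAlgebra ℂ (ℤ × ℤ)`, i.e. a finitely supported family of
coefficients indexed by exponent vectors `(i, j) ∈ ℤ²`. -/

/-- Evaluation of a Laurent polynomial at `(z, w) ∈ (ℂ*)²`. -/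
noncomputable def lEval (F : AddMonoidAlgebra ℂ (ℤ × ℤ)) (z w : ℂ) : ℂ :=
  Finsupp.sum F.coeff fun m c => c * z ^ m.1 * w ^ m.2

/-- `z·∂_z f`, the first coordinate of the logarithmic Gauss map (numerator). -/
noncomputable def lDlogz (F : AddMonoidAlgebra ℂ (ℤ × ℤ)) (z w : ℂ) : ℂ :=
  Finsupp.sum F.coeff fun m c => (m.1 : ℂ) * c * z ^ m.1 * w ^ m.2

/-- `w·∂_w f`, the second coordinate of the logarithmic Gauss map. -/
noncomputable def lDlogw (F : AddMonoidAlgebra ℂ (ℤ × ℤ)) (z w : ℂ) : ℂ :=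
  Finsupp.sum F.coeff fun m c => (m.2 : ℂ) * c * z ^ m.1 * w ^ m.2

namespace AddMonoidAlgebra

variable {R M : Type*}

theorem coeff_support_nonempty [Semiring R] {A : R[M]} (hA : A ≠ 0) : A.coeff.support.Nonempty :=
  Finsupp.support_nonempty_iff.2 (coeff_eq_zero.not.2 hA)

theorem eq_single_of_isLeast_of_isGreatest [Semiring R] [PartialOrder M] {A : R[M]} {a : M}
    (hl : IsLeast (A.coeff.support : Set M) a) (hg : IsGreatest (A.coeff.support : Set M) a) :
    A = single a (A.coeff a) :=
  AddMonoidAlgebra.ext <| Finsupp.support_subset_singleton.1 fun _ hx =>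
    Finset.mem_singleton.2 <| le_antisymm (hg.2 hx) (hl.2 hx)

theorem isUnit_single [Semiring R] [AddGroup M] (m : M) {c : R} (hc : IsUnit c) :
    IsUnit (single m c) := by
  obtain ⟨u, rfl⟩ := hc
  exact ⟨⟨single m u, single (-m) ↑u⁻¹, by simp [single_mul_single, one_def],
    by simp [single_mul_single, one_def]⟩, rfl⟩

theorem coeff_support_nontrivial_of_irreducible [Field R] [AddGroup M] {F : R[M]}
    (hF : Irreducible F) : F.coeff.support.Nontrivial := by
  obtain ⟨m, hm⟩ := coeff_support_nonempty hF.ne_zero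
  refine (Finset.nontrivial_iff_ne_singleton hm).2 fun h => hF.not_isUnit ?_
  rw [AddMonoidAlgebra.ext (Finsupp.support_subset_singleton.1 h.subset)]
  exact isUnit_single m (Finsupp.mem_support_iff.1 hm).isUnit

theorem exists_eq_single_mul_mapDomain {N : Type*} [Semiring R] [AddCommGroup N] {F : R[N]}
    {e : M → N} (he : Function.Injective e) {m₀ : N}
    (hF : ∀ m ∈ F.coeff.support, ∃ k, e k = m - m₀) :
    ∃ g : R[M], F = single m₀ 1 * mapDomain e g := by
  have hsupp : ↑(single (-m₀) 1 * F).coeff.support ⊆ Set.range e := by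
    rw [support_coeff_single_mul _ _ (by simp)]
    intro _ hx
    obtain ⟨m, hm, rfl⟩ := Finset.mem_map.1 hx
    obtain ⟨k, hk⟩ := hF m hm
    exact ⟨k, hk.trans (neg_add_eq_sub _ _).symm⟩
  refine ⟨comapDomain e he (single (-m₀) 1 * F), ?_⟩
  rw [mapDomain_comapDomain hsupp he, ← mul_assoc, single_mul_single, add_neg_cancel, one_mul,
    ← one_def, one_mul]

section LinearOrder

variable [AddCommMonoid M] [LinearOrder M] [IsOrderedCancelAddMonoid M]

section Semiring

variable [Semiring R] [NoZeroDivisors R] {A B : R[M]} {a b : M}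

theorem isGreatest_support_mul (hA : IsGreatest (A.coeff.support : Set M) a)
    (hB : IsGreatest (B.coeff.support : Set M) b) :
    IsGreatest ((A * B).coeff.support : Set M) (a + b) := by
  refine ⟨?_, fun x hx => ?_⟩
  · have hunique : UniqueAdd A.coeff.support B.coeff.support a b := fun _ _ hx hy he =>
      (add_eq_add_iff_eq_and_eq (hA.2 hx) (hB.2 hy)).1 he
    simp only [Finset.mem_coe, Finsupp.mem_support_iff, coeff_mul_add_of_uniqueAdd hunique]
    exact mul_ne_zero (Finsupp.mem_support_iff.1 hA.1) (Finsupp.mem_support_iff.1 hB.1)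
  · obtain ⟨u, hu, v, hv, rfl⟩ := Finset.mem_add.1 (support_coeff_mul_subset A B hx)
    exact add_le_add (hA.2 hu) (hB.2 hv)

theorem isLeast_support_mul (hA : IsLeast (A.coeff.support : Set M) a)
    (hB : IsLeast (B.coeff.support : Set M) b) :
    IsLeast ((A * B).coeff.support : Set M) (a + b) :=
  isGreatest_support_mul (M := Mᵒᵈ) hA hB

theorem exists_eq_single_of_isUnit [Nontrivial R] {U : R[M]} (hU : IsUnit U) :
    ∃ m c, c ≠ 0 ∧ U = single m c := by
  obtain ⟨V, hUV⟩ := hU.exists_right_inv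
  have hU := coeff_support_nonempty (left_ne_zero_of_mul_eq_one hUV)
  have hV := coeff_support_nonempty (right_ne_zero_of_mul_eq_one hUV)
  have hUg := Finset.isGreatest_max' _ hU
  have hUl := Finset.isLeast_min' _ hU
  have hVg := Finset.isGreatest_max' _ hV
  have hVl := Finset.isLeast_min' _ hV
  have hsupp : ((U * V).coeff.support : Set M) = {0} := by simp [hUV, one_def]
  have hmax := (isGreatest_support_mul hUg hVg).unique (hsupp ▸ isGreatest_singleton)
  have hmin := (isLeast_support_mul hUl hVl).unique (hsupp ▸ isLeast_singleton)
  have hwidth := (add_eq_add_iff_eq_and_eq (hUl.2 hUg.1) (hVl.2 hVg.1)).1 (hmin.trans hmax.symm)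
  exact ⟨_, _, Finsupp.mem_support_iff.1 hUg.1,
    eq_single_of_isLeast_of_isGreatest (hwidth.1 ▸ hUl) hUg⟩

end Semiring

theorem exists_eq_smul_of_dvd_of_support_subset [CommSemiring R] [NoZeroDivisors R] {A G : R[M]}
    (hA : A ≠ 0) (hAG : A ∣ G) (hs : G.coeff.support ⊆ A.coeff.support) :
    ∃ c : R, G = c • A := by
  obtain ⟨H, rfl⟩ := hAG
  rcases eq_or_ne H 0 with rfl | hH
  · exact ⟨0, by simp⟩
  have hAg := Finset.isGreatest_max' _ (coeff_support_nonempty hA)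
  have hAl := Finset.isLeast_min' _ (coeff_support_nonempty hA)
  have hHg := Finset.isGreatest_max' _ (coeff_support_nonempty hH)
  have hHl := Finset.isLeast_min' _ (coeff_support_nonempty hH)
  have hle := (add_le_iff_nonpos_right _).1 (hAg.2 (hs (isGreatest_support_mul hAg hHg).1))
  have hge := (le_add_iff_nonneg_right _).1 (hAl.2 (hs (isLeast_support_mul hAl hHl).1))
  have hmax : H.coeff.support.max' _ = 0 := le_antisymm hle (hge.trans (hHl.2 hHg.1))
  have hmin : H.coeff.support.min' _ = 0 := le_antisymm ((hHl.2 hHg.1).trans hle) hge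
  refine ⟨H.coeff 0, ?_⟩
  rw [eq_single_of_isLeast_of_isGreatest (A := H) (hmin ▸ hHl) (hmax ▸ hHg)]
  ext m
  simp [coeff_mul_single_zero, mul_comm]

end LinearOrder

section Lex

variable {N : Type*} [AddCommMonoid M] [LinearOrder M] [IsOrderedCancelAddMonoid M]
  [AddCommMonoid N] [LinearOrder N] [IsOrderedCancelAddMonoid N]

theorem exists_eq_single_of_isUnit_prod [CommSemiring R] [NoZeroDivisors R] [Nontrivial R]
    {U : R[M × N]} (hU : IsUnit U) : ∃ m c, c ≠ 0 ∧ U = single m c := by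
  let e := domCongr R R (toLexAddEquiv (M × N))
  obtain ⟨m, c, hc, he⟩ := exists_eq_single_of_isUnit (hU.map e)
  refine ⟨ofLex m, c, hc, e.injective ?_⟩
  rw [he, domCongr_single]
  rfl

theorem exists_eq_smul_of_dvd_of_support_subset_prod [CommSemiring R] [NoZeroDivisors R]
    {A G : R[M × N]} (hA : A ≠ 0) (hAG : A ∣ G) (hs : G.coeff.support ⊆ A.coeff.support) :
    ∃ c : R, G = c • A := by
  let e := domCongr R R (toLexAddEquiv (M × N))
  obtain ⟨c, hc⟩ := exists_eq_smul_of_dvd_of_support_subset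
    ((map_ne_zero_iff e e.injective).2 hA) (map_dvd e hAG) (by simpa [e] using hs)
  exact ⟨c, e.injective (by rw [hc, map_smul])⟩

theorem isLocalHom_mapDomainRingHom {K G : Type*} [Field K] [AddCommGroup G] {e : G →+ M × N}
    (he : Function.Injective e) : IsLocalHom (mapDomainRingHom K e) := by
  refine ⟨fun Y hY => ?_⟩
  obtain ⟨n, c, hc, hYn⟩ := exists_eq_single_of_isUnit_prod hY
  have hmap : ∀ j ∈ Y.coeff.support, e j = n := fun j hj => by
    have : (mapDomainRingHom K e Y).coeff (e j) ≠ 0 := by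
      rw [mapDomainRingHom_apply, coeff_mapDomain, Finsupp.mapDomain_apply he]
      exact Finsupp.mem_support_iff.1 hj
    rw [hYn] at this
    by_contra hne
    exact this (by simp [hne])
  have hY : Y ≠ 0 := by
    rintro rfl
    exact hc (by simpa [eq_comm] using hYn)
  obtain ⟨k, hk⟩ := coeff_support_nonempty hY
  rw [AddMonoidAlgebra.ext (Finsupp.support_subset_singleton.1 fun j hj =>
    Finset.mem_singleton.2 (he ((hmap j hj).trans (hmap k hk).symm)))]
  exact isUnit_single k (Finsupp.mem_support_iff.1 hk).isUnit

end Lex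

theorem irreducible_of_irreducible_single_mul_mapDomain {K G M N : Type*} [Field K]
    [AddCommGroup G] [AddCommGroup M] [LinearOrder M] [IsOrderedAddMonoid M] [AddCommGroup N]
    [LinearOrder N] [IsOrderedAddMonoid N] {e : G →+ M × N} (he : Function.Injective e)
    {m : M × N} {g : K[G]} (h : Irreducible (single m 1 * mapDomain e g)) : Irreducible g :=
  have := isLocalHom_mapDomainRingHom (K := K) he
  Irreducible.of_map (f := mapDomainRingHom K e)
    ((irreducible_isUnit_mul (isUnit_single m isUnit_one)).1 h)

end AddMonoidAlgebra

namespace LaurentPolynomial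

open Polynomial in
theorem exists_associated_T_sub_C {k : Type*} [Field k] [IsAlgClosed k] {g : k[T;T⁻¹]}
    (hg : Irreducible g) : ∃ c : k, c ≠ 0 ∧ Associated (T 1 - C c) g := by
  let ι := IsLocalization.toLocalizationMap (Submonoid.powers (X : k[X])) k[T;T⁻¹]
  obtain ⟨⟨P, s⟩, hPs⟩ := ι.surj g
  obtain ⟨u, f, hu, hf, rfl⟩ := ι.eq_isUnit_map_mul_irreducible_of_irreducible_map
    (hPs ▸ (irreducible_mul_isUnit (ι.map_units s)).2 hg)
  obtain ⟨c, hc⟩ := IsAlgClosed.exists_root f (degree_pos_of_irreducible hf).ne'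
  have hfc : Associated (X - Polynomial.C c) f :=
    (irreducible_X_sub_C c).associated_of_dvd hf (dvd_iff_isRoot.2 hc)
  have hT : Associated (T 1 - C c) (ι f) := by
    simpa [ι, algebraMap_eq_toLaurent] using hfc.map ι
  have hassoc : Associated (T 1 - C c) g := by
    refine hT.trans ((associated_unit_mul_left _ _ hu).symm.trans ?_)
    rw [← map_mul]
    exact hPs ▸ associated_mul_unit_left _ _ (ι.map_units s)
  refine ⟨c, fun hc0 => hg.not_isUnit (hassoc.isUnit ?_), hassoc⟩
  simpa [hc0] using isUnit_T (R := k) 1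

end LaurentPolynomial

theorem mul_eq_mul_of_mul_eq_mul_of_mul_eq_mul {K : Type*} [Field K] {p q x₁ x₂ y₁ y₂ : K}
    (hpq : p ≠ 0 ∨ q ≠ 0) (hx : q * x₁ = p * x₂) (hy : q * y₁ = p * y₂) :
    x₁ * y₂ = x₂ * y₁ := by
  rcases hpq with hp | hq
  · exact mul_left_cancel₀ hp (by linear_combination y₁ * hx - x₁ * hy)
  · exact mul_left_cancel₀ hq (by linear_combination y₂ * hx - x₂ * hy)

theorem IsCoprime.exists_eq_mul_of_mul_eq_mul {R : Type*} [CommRing R] {a b x y : R}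
    (hab : IsCoprime a b) (h : x * b = y * a) : ∃ k, x = k * a ∧ y = k * b := by
  obtain ⟨u, v, huv⟩ := hab
  exact ⟨u * x + v * y, by linear_combination (-x) * huv + v * h,
    by linear_combination (-y) * huv - u * h⟩

theorem exists_isCoprime_of_forall_mem_line {K : Type*} [Field K] [CharZero K]
    {S : Set (ℤ × ℤ)} {p q c : K} (hpq : p ≠ 0 ∨ q ≠ 0) (hS : ∀ m ∈ S, q * m.1 - p * m.2 = c)
    {m₀ m₁ : ℤ × ℤ} (h₀ : m₀ ∈ S) (h₁ : m₁ ∈ S) (hne : m₀ ≠ m₁) :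
    ∃ a b : ℤ, IsCoprime a b ∧ ∀ m ∈ S, ∃ k : ℤ, k • (a, b) = m - m₀ := by
  have hdir : ∀ m ∈ S, q * ((m - m₀).1 : K) = p * (m - m₀).2 := fun m hm => by
    simp only [Prod.fst_sub, Prod.snd_sub, Int.cast_sub]
    linear_combination hS m hm - hS m₀ h₀
  have hd : 0 < Int.gcd (m₁ - m₀).1 (m₁ - m₀).2 :=
    Int.gcd_pos_iff.2 (by contrapose! hne; exact (sub_eq_zero.1 (Prod.ext hne.1 hne.2)).symm)
  obtain ⟨g, a, b, hg, hab, ha, hb⟩ := Int.exists_gcd_one' hd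
  have hab' := Int.isCoprime_iff_gcd_eq_one.2 hab
  refine ⟨a, b, hab', fun m hm => ?_⟩
  have hcross : (m - m₀).1 * (m₁ - m₀).2 = (m - m₀).2 * (m₁ - m₀).1 := by
    exact_mod_cast mul_eq_mul_of_mul_eq_mul_of_mul_eq_mul hpq (hdir m hm) (hdir m₁ h₁)
  rw [ha, hb] at hcross
  have hg' : (g : ℤ) ≠ 0 := Int.natCast_ne_zero.2 hg.ne'
  obtain ⟨k, hk₁, hk₂⟩ := hab'.exists_eq_mul_of_mul_eq_mul (x := (m - m₀).1) (y := (m - m₀).2)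
    (mul_right_cancel₀ hg' (by linear_combination hcross))
  exact ⟨k, Prod.ext (by simp [hk₁]) (by simp [hk₂])⟩

open AddMonoidAlgebra

section TorusEvaluation

def torusCharacter (z w : ℂˣ) : Multiplicative (ℤ × ℤ) →* ℂˣ where
  toFun m := z ^ m.toAdd.1 * w ^ m.toAdd.2
  map_one' := by simp
  map_mul' m n := by
    simp only [toAdd_mul, Prod.fst_add, Prod.snd_add, zpow_add]
    exact mul_mul_mul_comm ..

noncomputable def torusEval (z w : ℂˣ) : ℂ[ℤ × ℤ] →ₐ[ℂ] ℂ :=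
  lift ℂ ℂ (ℤ × ℤ) ((Units.coeHom ℂ).comp (torusCharacter z w))

theorem lEval_eq_torusEval (F : ℂ[ℤ × ℤ]) (z w : ℂˣ) : lEval F z w = torusEval z w F := by
  rw [torusEval, lift_apply]
  refine Finsupp.sum_congr fun m _ => ?_
  simp [torusCharacter, mul_assoc]

theorem lEval_mul (A B : ℂ[ℤ × ℤ]) (z w : ℂˣ) :
    lEval (A * B) z w = lEval A z w * lEval B z w := by
  simp only [lEval_eq_torusEval, map_mul]

theorem lEval_eq_zero_iff_of_associated {A B : ℂ[ℤ × ℤ]} (h : Associated A B) (z w : ℂˣ) :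
    lEval A z w = 0 ↔ lEval B z w = 0 := by
  obtain ⟨u, rfl⟩ := h
  have hu : lEval u z w ≠ 0 := by
    rw [lEval_eq_torusEval]
    exact (u.isUnit.map _).ne_zero
  rw [lEval_mul, mul_eq_zero, or_iff_left hu]

end TorusEvaluation

section PolyToLaurent

noncomputable def expToInt : (Fin 2 →₀ ℕ) →+ ℤ × ℤ :=
  ((Nat.castAddMonoidHom ℤ).comp (Finsupp.applyAddHom 0)).prod
    ((Nat.castAddMonoidHom ℤ).comp (Finsupp.applyAddHom 1))

@[simp]
theorem expToInt_apply (v : Fin 2 →₀ ℕ) : expToInt v = ((v 0 : ℤ), (v 1 : ℤ)) := rfl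

theorem expToInt_injective : Function.Injective expToInt := by
  intro u v h
  simp only [expToInt_apply, Prod.mk.injEq, Nat.cast_inj] at h
  ext i
  fin_cases i <;> simp [h.1, h.2]

theorem exists_le_expToInt (n : ℤ × ℤ) : ∃ v, n ≤ expToInt v ∧ (0 ≤ n → expToInt v = n) := by
  refine ⟨Finsupp.single 0 n.1.toNat + Finsupp.single 1 n.2.toNat, ?_, fun hn => ?_⟩
  · simp [Prod.le_def]
  · simp [Int.toNat_of_nonneg hn.1, Int.toNat_of_nonneg hn.2]

variable {R : Type*} [CommSemiring R]

noncomputable def polyToLaurent : MvPolynomial (Fin 2) R →+* R[ℤ × ℤ] :=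
  mapDomainRingHom R expToInt

theorem polyToLaurent_injective : Function.Injective (polyToLaurent (R := R)) :=
  mapDomain_injective expToInt_injective

theorem polyToLaurent_monomial (v : Fin 2 →₀ ℕ) (c : R) :
    polyToLaurent (MvPolynomial.monomial v c) = single (expToInt v) c :=
  mapDomain_single ..

theorem polyToLaurent_monomialOneHom (v : Multiplicative (Fin 2 →₀ ℕ)) :
    polyToLaurent (MvPolynomial.monomialOneHom R (Fin 2) v) = single (expToInt v.toAdd) 1 :=
  polyToLaurent_monomial _ _

theorem lEval_polyToLaurent (P : MvPolynomial (Fin 2) ℂ) (z w : ℂˣ) :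
    lEval (polyToLaurent P) z w = MvPolynomial.eval ![(z : ℂ), w] P := by
  rw [lEval_eq_torusEval]
  change ((torusEval z w).toRingHom.comp polyToLaurent) P = _
  congr 1
  refine MvPolynomial.ringHom_ext (fun c => ?_) (fun i => ?_)
  · simp [← MvPolynomial.monomial_zero', polyToLaurent_monomial, torusEval, lift_single,
      torusCharacter, MvPolynomial.eval_monomial]
  · fin_cases i <;> simp [MvPolynomial.X, polyToLaurent_monomial, torusEval, lift_single,
      torusCharacter, MvPolynomial.eval_monomial]

theorem exists_mul_single_eq_polyToLaurent (A : R[ℤ × ℤ]) :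
    ∃ v P, A * single (expToInt v) 1 = polyToLaurent P := by
  obtain ⟨l, hl⟩ := A.coeff.support.finite_toSet.bddBelow
  obtain ⟨v, hv, -⟩ := exists_le_expToInt (-l)
  have hsupp : ↑(A * single (expToInt v) 1).coeff.support ⊆ Set.range expToInt := by
    rw [support_coeff_mul_single _ _ (by simp)]
    intro _ hx
    obtain ⟨m, hm, rfl⟩ := Finset.mem_map.1 hx
    obtain ⟨u, -, hu⟩ := exists_le_expToInt (m + expToInt v)
    exact ⟨u, hu (by simpa using add_le_add (hl hm) hv)⟩
  exact ⟨v, _, (mapDomain_comapDomain hsupp expToInt_injective).symm⟩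

noncomputable def polyToLaurentLocalizationMap :
    (MonoidHom.mrange (MvPolynomial.monomialOneHom R (Fin 2))).LocalizationMap R[ℤ × ℤ] where
  toFun := polyToLaurent
  map_mul' := map_mul _
  isLocalizationMap :=
    { map_units := by
        rintro ⟨_, v, rfl⟩
        change IsUnit (polyToLaurent (MvPolynomial.monomialOneHom R (Fin 2) v))
        rw [polyToLaurent_monomialOneHom]
        exact isUnit_single _ isUnit_one
      surj := fun A => by
        obtain ⟨v, P, hP⟩ := exists_mul_single_eq_polyToLaurent A
        refine ⟨⟨P, _, .ofAdd v, rfl⟩, ?_⟩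
        change A * polyToLaurent (MvPolynomial.monomialOneHom R (Fin 2) (.ofAdd v)) = _
        rwa [polyToLaurent_monomialOneHom]
      exists_of_eq := fun h => ⟨1, by rw [polyToLaurent_injective h]⟩ }

theorem exists_irreducible_associated_polyToLaurent {K : Type*} [Field K] {F : K[ℤ × ℤ]}
    (hF : Irreducible F) : ∃ f, Irreducible f ∧ Associated F (polyToLaurent f) := by
  let ι := polyToLaurentLocalizationMap (R := K)
  obtain ⟨⟨P, s⟩, hPs⟩ := ι.surj F
  obtain ⟨u, f, hu, hf, rfl⟩ := ι.eq_isUnit_map_mul_irreducible_of_irreducible_map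
    (hPs ▸ (irreducible_mul_isUnit (ι.map_units s)).2 hF)
  refine ⟨f, hf, (associated_mul_unit_right _ _ (ι.map_units s)).trans ?_⟩
  rw [hPs, map_mul ι]
  exact associated_unit_mul_left _ _ hu

end PolyToLaurent

open MvPolynomial in
theorem MvPolynomial.dvd_X_mul_X_mul_of_eval_eq_zero {k : Type*} [Field k] [IsAlgClosed k]
    {f Q : MvPolynomial (Fin 2) k} (hf : Irreducible f)
    (hQ : ∀ z w : kˣ, eval ![(z : k), w] f = 0 → eval ![(z : k), w] Q = 0) :
    f ∣ X 0 * X 1 * Q := by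
  have := (Ideal.span_singleton_prime hf.ne_zero).2 hf.prime
  rw [← Ideal.mem_span_singleton, ← IsPrime.vanishingIdeal_zeroLocus (K := k) (Ideal.span {f}),
    mem_vanishingIdeal_iff]
  intro x hx
  change eval x (X 0 * X 1 * Q) = 0
  rw [map_mul, map_mul, eval_X, eval_X]
  by_cases h0 : x 0 = 0
  · simp [h0]
  by_cases h1 : x 1 = 0
  · simp [h1]
  have hx' : x = ![(Units.mk0 _ h0 : k), Units.mk0 _ h1] := by
    ext i; fin_cases i <;> rfl
  have hfx : eval x f = 0 := hx f (Ideal.subset_span rfl)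
  rw [hx'] at hfx ⊢
  rw [hQ _ _ hfx, mul_zero]

open MvPolynomial in
theorem dvd_of_forall_lEval_eq_zero {F G : ℂ[ℤ × ℤ]} (hF : Irreducible F)
    (hG : ∀ z w : ℂˣ, lEval F z w = 0 → lEval G z w = 0) : F ∣ G := by
  let ι := polyToLaurentLocalizationMap (R := ℂ)
  obtain ⟨f, hf, hFf⟩ := exists_irreducible_associated_polyToLaurent hF
  obtain ⟨⟨Q, t⟩, hQt⟩ := ι.surj G
  have hfQ := dvd_X_mul_X_mul_of_eval_eq_zero hf fun z w hfzw => by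
    rw [← lEval_polyToLaurent] at hfzw ⊢
    rw [← show G * ι t = polyToLaurent Q from hQt, lEval_mul,
      hG z w ((lEval_eq_zero_iff_of_associated hFf z w).2 hfzw), zero_mul]
  have hX : IsUnit (ι (X 0 * X 1)) := ι.map_units
    ⟨_, mul_mem ⟨.ofAdd (Finsupp.single 0 1), rfl⟩ ⟨.ofAdd (Finsupp.single 1 1), rfl⟩⟩
  have : F ∣ ι (X 0 * X 1) * (G * ι t) := by
    rw [hQt, ← map_mul ι]
    exact hFf.dvd.trans (map_dvd polyToLaurent hfQ)
  exact (ι.map_units t).dvd_mul_right.1 (hX.dvd_mul_left.1 this)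

/-- `q·z∂_z F - p·w∂_w F`. When `[p : q]` is a value of the logarithmic Gauss map of `F`, its
constancy says exactly that this vanishes on `V(F)`. -/
noncomputable def logDirDeriv (p q : ℂ) (F : ℂ[ℤ × ℤ]) : ℂ[ℤ × ℤ] :=
  ofCoeff ((fun m : ℤ × ℤ => q * m.1 - p * m.2) • F.coeff)

theorem coeff_logDirDeriv (p q : ℂ) (F : ℂ[ℤ × ℤ]) (m : ℤ × ℤ) :
    (logDirDeriv p q F).coeff m = (q * m.1 - p * m.2) * F.coeff m :=
  rfl

theorem support_logDirDeriv_subset (p q : ℂ) (F : ℂ[ℤ × ℤ]) :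
    (logDirDeriv p q F).coeff.support ⊆ F.coeff.support := fun m hm => by
  rw [Finsupp.mem_support_iff, coeff_logDirDeriv] at hm
  exact Finsupp.mem_support_iff.2 (right_ne_zero_of_mul hm)

theorem lEval_logDirDeriv (p q : ℂ) (F : ℂ[ℤ × ℤ]) (z w : ℂ) :
    lEval (logDirDeriv p q F) z w = q * lDlogz F z w - p * lDlogw F z w := by
  rw [lEval, Finsupp.sum_of_support_subset _ (support_logDirDeriv_subset p q F) _ (by simp),
    lDlogz, lDlogw, Finsupp.mul_sum, Finsupp.mul_sum, ← Finsupp.sum_sub]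
  refine Finset.sum_congr rfl fun m _ => ?_
  rw [coeff_logDirDeriv]
  ring

theorem exists_line_through_support {F : ℂ[ℤ × ℤ]} (hirr : Irreducible F)
    (hne : ∃ z w : ℂ, z ≠ 0 ∧ w ≠ 0 ∧ lEval F z w = 0)
    (hsmooth : ∀ z w : ℂ, z ≠ 0 → w ≠ 0 → lEval F z w = 0 →
      ¬(lDlogz F z w = 0 ∧ lDlogw F z w = 0))
    (hconst : ∀ z w z' w' : ℂ, z ≠ 0 → w ≠ 0 → z' ≠ 0 → w' ≠ 0 →
      lEval F z w = 0 → lEval F z' w' = 0 →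
      lDlogz F z w * lDlogw F z' w' = lDlogz F z' w' * lDlogw F z w) :
    ∃ p q c : ℂ, (p ≠ 0 ∨ q ≠ 0) ∧ ∀ m ∈ F.coeff.support, q * m.1 - p * m.2 = c := by
  obtain ⟨z₀, w₀, hz₀, hw₀, hF₀⟩ := hne
  set p := lDlogz F z₀ w₀
  set q := lDlogw F z₀ w₀
  have hdvd : F ∣ logDirDeriv p q F := dvd_of_forall_lEval_eq_zero hirr fun z w hF => by
    rw [lEval_logDirDeriv]
    linear_combination hconst z w z₀ w₀ z.ne_zero w.ne_zero hz₀ hw₀ hF hF₀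
  obtain ⟨c, hc⟩ := exists_eq_smul_of_dvd_of_support_subset_prod hirr.ne_zero hdvd
    (support_logDirDeriv_subset p q F)
  refine ⟨p, q, c, not_and_or.1 (hsmooth z₀ w₀ hz₀ hw₀ hF₀), fun m hm => ?_⟩
  have := congrArg (·.coeff m) hc
  simp only [coeff_logDirDeriv, coeff_smul] at this
  exact mul_right_cancel₀ (Finsupp.mem_support_iff.1 hm) this

theorem stmt_1 (F : AddMonoidAlgebra ℂ (ℤ × ℤ))
    (hirr : Irreducible F)
    (hne : ∃ z w : ℂ, z ≠ 0 ∧ w ≠ 0 ∧ lEval F z w = 0)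
    (hsmooth : ∀ z w : ℂ, z ≠ 0 → w ≠ 0 → lEval F z w = 0 →
      ¬(lDlogz F z w = 0 ∧ lDlogw F z w = 0))
    (hconst : ∀ z w z' w' : ℂ, z ≠ 0 → w ≠ 0 → z' ≠ 0 → w' ≠ 0 →
      lEval F z w = 0 → lEval F z' w' = 0 →
      lDlogz F z w * lDlogw F z' w' = lDlogz F z' w' * lDlogw F z w) :
    ∃ (a b i j : ℤ) (c u : ℂ), IsCoprime a b ∧ c ≠ 0 ∧ u ≠ 0 ∧
      F = u • (AddMonoidAlgebra.single ((i, j) : ℤ × ℤ) (1 : ℂ) *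
        (AddMonoidAlgebra.single ((a, b) : ℤ × ℤ) (1 : ℂ) -
          AddMonoidAlgebra.single ((0, 0) : ℤ × ℤ) c)) := by
  obtain ⟨p, q, c₀, hpq, hline⟩ := exists_line_through_support hirr hne hsmooth hconst
  obtain ⟨m₀, h₀, m₁, h₁, hm⟩ := coeff_support_nontrivial_of_irreducible hirr
  obtain ⟨a, b, hab, hdir⟩ :=
    exists_isCoprime_of_forall_mem_line (S := F.coeff.support) hpq hline h₀ h₁ hm
  set e := zmultiplesHom (ℤ × ℤ) (a, b)
  have he : Function.Injective e := smul_left_injective ℤ fun h => by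
    obtain ⟨rfl, rfl⟩ := Prod.ext_iff.1 h
    exact not_isCoprime_zero_zero hab
  obtain ⟨g, rfl⟩ := exists_eq_single_mul_mapDomain he hdir
  obtain ⟨c, hc, u, rfl⟩ := LaurentPolynomial.exists_associated_T_sub_C
    (irreducible_of_irreducible_single_mul_mapDomain he hirr)
  obtain ⟨k, d, hd, hu⟩ := exists_eq_single_of_isUnit u.isUnit
  refine ⟨a, b, m₀.1 + k * a, m₀.2 + k * b, c, d, hab, hc, hd, ?_⟩
  have hmono : d • single (m₀.1 + k * a, m₀.2 + k * b) (1 : ℂ) =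
      single m₀ 1 * single (k • (a, b)) d := by
    rw [smul_single, smul_eq_mul, mul_one, single_mul_single, one_mul]
    congr 1
  rw [← smul_mul_assoc, hmono, ← mapDomainRingHom_apply, map_mul, map_sub, hu,
    LaurentPolynomial.T, ← LaurentPolynomial.single_eq_C]
  simp only [mapDomainRingHom_apply, mapDomain_single, e, zmultiplesHom_apply, one_smul,
    zero_smul, Prod.mk_zero_zero]
  ring
end

section
/- For f(z,w) = 1 + z + w + α·zw with α ∈ ℂ \ {0,1}, the critical parameters of the rational map t ↦ t(1+t)(1−α)/(1 + t(1−α)) are exactly the roots of t²(1−α) + 2t + 1 = 0, namely t_± = (1 ± √α)/(α − 1), and one of t_+ , t_− is real if and only if α ∈ ℝ_{≥0}. -/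
/-!
The derivative of `g(t) = t(1+t)c/(1+tc)` is `c(ct² + 2t + 1)/(1+tc)²`, so for `c = 1 - α ≠ 0`
the critical parameters are the roots of `(1-α)t² + 2t + 1`. Given `s² = α` this quadratic factors
as `-((α-1)t - (1+s))((α-1)t - (1-s))/(α-1)`. It can be rewritten as `α t² = (t+1)²`, so a real
root `t` (necessarily nonzero) gives `α = ((t+1)/t)² ≥ 0`; conversely for `α = r²` with `r ≥ 0`,
`t = -1/(1+r)` is a real root.
-/

theorem hasDerivAt_mul_one_add_mul_div {𝕜 : Type*} [NontriviallyNormedField 𝕜] {c t : 𝕜}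
    (ht : 1 + t * c ≠ 0) :
    HasDerivAt (fun x : 𝕜 => x * (1 + x) * c / (1 + x * c))
      (c * (c * t ^ 2 + 2 * t + 1) / (1 + t * c) ^ 2) t := by
  have hnum : HasDerivAt (fun x : 𝕜 => x * (1 + x) * c) ((1 * (1 + t) + t * 1) * c) t :=
    ((hasDerivAt_id' t).mul ((hasDerivAt_id' t).const_add 1)).mul_const c
  have hden : HasDerivAt (fun x : 𝕜 => 1 + x * c) (1 * c) t :=
    ((hasDerivAt_id' t).mul_const c).const_add 1
  exact (hnum.div hden ht).congr_deriv (by ring)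

theorem deriv_mul_one_add_mul_div_eq_zero_iff {𝕜 : Type*} [NontriviallyNormedField 𝕜] {c t : 𝕜}
    (hc : c ≠ 0) (ht : 1 + t * c ≠ 0) :
    deriv (fun x : 𝕜 => x * (1 + x) * c / (1 + x * c)) t = 0 ↔ c * t ^ 2 + 2 * t + 1 = 0 := by
  rw [(hasDerivAt_mul_one_add_mul_div ht).deriv, div_eq_zero_iff, mul_eq_zero]
  simp [hc, ht]

theorem one_sub_mul_sq_add_two_mul_add_one_eq_zero_iff {K : Type*} [Field K] {a s t : K}
    (hs : s ^ 2 = a) (ha : a ≠ 1) :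
    (1 - a) * t ^ 2 + 2 * t + 1 = 0 ↔ t = (1 + s) / (a - 1) ∨ t = (1 - s) / (a - 1) := by
  have ha' : a - 1 ≠ 0 := sub_ne_zero.mpr ha
  have hfactor : (t * (a - 1) - (1 + s)) * (t * (a - 1) - (1 - s)) =
      (1 - a) * ((1 - a) * t ^ 2 + 2 * t + 1) := by
    linear_combination -hs
  rw [eq_div_iff ha', eq_div_iff ha', ← sub_eq_zero (a := t * (a - 1)),
    ← sub_eq_zero (a := t * (a - 1)), ← mul_eq_zero, hfactor, mul_eq_zero,
    or_iff_right (sub_ne_zero.mpr (Ne.symm ha))]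

theorem exists_real_root_iff_exists_nonneg (a : ℂ) :
    (∃ t : ℝ, (1 - a) * (t : ℂ) ^ 2 + 2 * (t : ℂ) + 1 = 0) ↔ ∃ x : ℝ, 0 ≤ x ∧ (x : ℂ) = a := by
  constructor
  · rintro ⟨t, ht⟩
    have ht0 : (t : ℂ) ≠ 0 := by
      intro h0
      simp [h0] at ht
    refine ⟨((t + 1) / t) ^ 2, sq_nonneg _, ?_⟩
    push_cast
    field_simp
    linear_combination ht
  · rintro ⟨x, hx, rfl⟩
    have hr : ((Real.sqrt x : ℝ) : ℂ) ^ 2 = x := by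
      rw [← Complex.ofReal_pow, Real.sq_sqrt hx]
    have hr1 : (1 + (Real.sqrt x : ℂ)) ≠ 0 := by
      exact_mod_cast (by positivity : (1 + Real.sqrt x) ≠ 0)
    refine ⟨-1 / (1 + Real.sqrt x), ?_⟩
    push_cast
    field_simp
    linear_combination hr

theorem stmt_8_general (α : ℂ) (hα1 : α ≠ 1) :
    (∀ t : ℂ, 1 + t * (1 - α) ≠ 0 →
      (deriv (fun t' : ℂ => t' * (1 + t') * (1 - α) / (1 + t' * (1 - α))) t = 0 ↔
        (1 - α) * t ^ 2 + 2 * t + 1 = 0)) ∧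
    (∀ s : ℂ, s ^ 2 = α → ∀ t : ℂ,
      ((1 - α) * t ^ 2 + 2 * t + 1 = 0 ↔
        t = (1 + s) / (α - 1) ∨ t = (1 - s) / (α - 1))) ∧
    ((∃ t : ℝ, (1 - α) * (t : ℂ) ^ 2 + 2 * (t : ℂ) + 1 = 0) ↔
      (∃ x : ℝ, 0 ≤ x ∧ (x : ℂ) = α)) :=
  ⟨fun _ ht => deriv_mul_one_add_mul_div_eq_zero_iff (sub_ne_zero.mpr (Ne.symm hα1)) ht,
    fun _ hs _ => one_sub_mul_sq_add_two_mul_add_one_eq_zero_iff hs hα1,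
    exists_real_root_iff_exists_nonneg α⟩

theorem stmt_8 (α : ℂ) (hα0 : α ≠ 0) (hα1 : α ≠ 1) :
    (∀ t : ℂ, 1 + t * (1 - α) ≠ 0 →
      (deriv (fun t' : ℂ => t' * (1 + t') * (1 - α) / (1 + t' * (1 - α))) t = 0 ↔
        (1 - α) * t ^ 2 + 2 * t + 1 = 0)) ∧
    (∀ s : ℂ, s ^ 2 = α → ∀ t : ℂ,
      ((1 - α) * t ^ 2 + 2 * t + 1 = 0 ↔
        t = (1 + s) / (α - 1) ∨ t = (1 - s) / (α - 1))) ∧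
    ((∃ t : ℝ, (1 - α) * (t : ℂ) ^ 2 + 2 * (t : ℂ) + 1 = 0) ↔
      (∃ x : ℝ, 0 ≤ x ∧ (x : ℂ) = α)) :=
  stmt_8_general α hα1
end

section
/- For f_α(z,w) = 1 + z + w + α·zw − α·z² with α ∈ ℂ \ {0,1,2} and the parametrization z(t) = (−1−t+α)/(αt−α), w(t) = (−(1+t)t+α)/(αt−α), the logarithmic Gauss map satisfies γ_{f_α}(t) = [(α − 2t − 1 + t²)(1 + t − α) : (α − 2)(α − t − t²)] ∈ ℙ¹(ℂ), i.e., z(t)·∂_z f_α and w(t)·∂_w f_α at the parametrized point are proportional to these two expressions. -/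
/-!
Both partial derivatives of `f_α` are affine in `(z, w)`. Substituting the parametrization and
clearing the common denominator `(α t - α)²`, both `z ∂_z f_α` and `w ∂_w f_α` become
`α / (α t - α)²` times the claimed homogeneous coordinates.
-/

section PartialDerivatives

variable {𝕜 : Type*} [NontriviallyNormedField 𝕜]

theorem deriv_fAlpha_fst (α w z : 𝕜) :
    deriv (fun z' : 𝕜 => 1 + z' + w + α * z' * w - α * z' ^ 2) z = 1 + α * w - 2 * α * z := by
  have h : HasDerivAt (fun z' : 𝕜 => 1 + z' + w + α * z' * w - α * z' ^ 2)
      (1 + α * 1 * w - α * (↑2 * z ^ (2 - 1))) z :=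
    ((((hasDerivAt_id' z).const_add 1).add_const w).add
      (((hasDerivAt_id' z).const_mul α).mul_const w)).sub ((hasDerivAt_pow 2 z).const_mul α)
  rw [h.deriv]
  ring

theorem deriv_fAlpha_snd (α w z : 𝕜) :
    deriv (fun w' : 𝕜 => 1 + z + w' + α * z * w' - α * z ^ 2) w = 1 + α * z := by
  have h : HasDerivAt (fun w' : 𝕜 => 1 + z + w' + α * z * w' - α * z ^ 2) (1 + α * z * 1) w :=
    (((hasDerivAt_id' w).const_add (1 + z)).add
      ((hasDerivAt_id' w).const_mul (α * z))).sub_const (α * z ^ 2)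
  rw [h.deriv, mul_one]

end PartialDerivatives

section Parametrization

variable {K : Type*} [Field K] {α t : K}

theorem param_mul_deriv_fst (hden : α * t - α ≠ 0) :
    (-1 - t + α) / (α * t - α) *
        (1 + α * ((-(1 + t) * t + α) / (α * t - α)) - 2 * α * ((-1 - t + α) / (α * t - α))) =
      α / (α * t - α) ^ 2 * ((α - 2 * t - 1 + t ^ 2) * (1 + t - α)) := by
  obtain ⟨hα, ht⟩ := mul_ne_zero_iff.mp (by rwa [mul_sub_one] : α * (t - 1) ≠ 0)
  field_simp
  ring

theorem param_mul_deriv_snd (hden : α * t - α ≠ 0) :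
    (-(1 + t) * t + α) / (α * t - α) * (1 + α * ((-1 - t + α) / (α * t - α))) =
      α / (α * t - α) ^ 2 * ((α - 2) * (α - t - t ^ 2)) := by
  obtain ⟨hα, ht⟩ := mul_ne_zero_iff.mp (by rwa [mul_sub_one] : α * (t - 1) ≠ 0)
  field_simp
  ring

end Parametrization

theorem stmt_15_general (α : ℂ) (hα0 : α ≠ 0) (t : ℂ)
    (hden : α * t - α ≠ 0)
    (z w : ℂ) (hzdef : z = (-1 - t + α) / (α * t - α))
    (hwdef : w = (-(1 + t) * t + α) / (α * t - α)) :
    ∃ lam : ℂ, lam ≠ 0 ∧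
      z * deriv (fun z' : ℂ => 1 + z' + w + α * z' * w - α * z' ^ 2) z =
        lam * ((α - 2 * t - 1 + t ^ 2) * (1 + t - α)) ∧
      w * deriv (fun w' : ℂ => 1 + z + w' + α * z * w' - α * z ^ 2) w =
        lam * ((α - 2) * (α - t - t ^ 2)) := by
  refine ⟨α / (α * t - α) ^ 2, div_ne_zero hα0 (pow_ne_zero 2 hden), ?_, ?_⟩
  · rw [deriv_fAlpha_fst, hzdef, hwdef]
    exact param_mul_deriv_fst hden
  · rw [deriv_fAlpha_snd, hzdef, hwdef]
    exact param_mul_deriv_snd hden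

theorem stmt_15 (α : ℂ) (hα0 : α ≠ 0) (hα1 : α ≠ 1) (hα2 : α ≠ 2) (t : ℂ)
    (hden : α * t - α ≠ 0)
    (z w : ℂ) (hzdef : z = (-1 - t + α) / (α * t - α))
    (hwdef : w = (-(1 + t) * t + α) / (α * t - α))
    (hz : z ≠ 0) (hw : w ≠ 0) :
    ∃ lam : ℂ, lam ≠ 0 ∧
      z * deriv (fun z' : ℂ => 1 + z' + w + α * z' * w - α * z' ^ 2) z =
        lam * ((α - 2 * t - 1 + t ^ 2) * (1 + t - α)) ∧
      w * deriv (fun w' : ℂ => 1 + z + w' + α * z * w' - α * z ^ 2) w =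
        lam * ((α - 2) * (α - t - t ^ 2)) :=
  stmt_15_general α hα0 t hden z w hzdef hwdef
end
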